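/- arXiv:math-ph/0312013 — 3 statements merged into one kernel-verified Lean document; each statement's English description precedes it below -/
import Mathlib

section
/- Let 0 < ϰ < π/2 and let Q_ϰ = {z ∈ ℂ : z ≠ 0 and |arg z − π/2| ≥ ϰ and |arg z + π/2| ≥ ϰ}. Define P(z) = z/(e^z − 1). Then there exist constants C₁, C₂ > 0 such that |P(z)| ≤ C₁|z| + C₂ for all z ∈ Q_ϰ with e^z ≠ 1. -/
/-!
On the sector `Q_ϰ` the argument of `z` stays at angular distance at least `ϰ` from `±π/2`, so
`|Re z| ≥ sin ϰ · |z|`. In the right half-plane `|e^z - 1| ≥ e^{Re z} - 1 ≥ Re z`, which makes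
`|P z|` bounded; in the left half-plane `|e^z - 1| ≥ 1 - e^{Re z}` stays away from `0` like
`t / (1 + t)` with `t = sin ϰ · |z|`, which makes `|P z|` grow at most linearly.
-/

open Complex Real

lemma Real.sin_le_abs_cos_of_le_abs_sub_pi_div_two {ϰ θ : ℝ} (hϰ : 0 ≤ ϰ) (hθ₁ : -π ≤ θ)
    (hθ₂ : θ ≤ π) (h₁ : ϰ ≤ |θ - π / 2|) (h₂ : ϰ ≤ |θ + π / 2|) :
    Real.sin ϰ ≤ |Real.cos θ| := by
  rcases le_abs.mp h₁ with h₁ | h₁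
  · have hcos : Real.cos θ ≤ Real.cos (ϰ + π / 2) :=
      Real.cos_le_cos_of_nonneg_of_le_pi (by linarith) hθ₂ (by linarith)
    rw [Real.cos_add_pi_div_two] at hcos
    exact le_abs.mpr (Or.inr (by linarith))
  rcases le_abs.mp h₂ with h₂ | h₂
  · have hcos : Real.cos (π / 2 - ϰ) ≤ Real.cos |θ| :=
      Real.cos_le_cos_of_nonneg_of_le_pi (abs_nonneg θ) (by linarith)
        (abs_le.mpr ⟨by linarith, by linarith⟩)
    rw [Real.cos_pi_div_two_sub, Real.cos_abs] at hcos
    exact hcos.trans (le_abs_self _)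
  · have hcos : Real.cos (-θ) ≤ Real.cos (ϰ + π / 2) :=
      Real.cos_le_cos_of_nonneg_of_le_pi (by linarith) (by linarith) (by linarith)
    rw [Real.cos_add_pi_div_two, Real.cos_neg] at hcos
    exact le_abs.mpr (Or.inr (by linarith))

lemma Complex.sin_mul_norm_le_abs_re {ϰ : ℝ} (hϰ : 0 ≤ ϰ) {z : ℂ}
    (h₁ : ϰ ≤ |arg z - π / 2|) (h₂ : ϰ ≤ |arg z + π / 2|) :
    Real.sin ϰ * ‖z‖ ≤ |z.re| := by
  rw [← norm_mul_cos_arg, abs_mul, abs_norm, mul_comm]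
  exact mul_le_mul_of_nonneg_left
    (Real.sin_le_abs_cos_of_le_abs_sub_pi_div_two hϰ (neg_pi_lt_arg z).le (arg_le_pi z) h₁ h₂)
    (norm_nonneg z)

lemma Complex.abs_exp_re_sub_one_le (z : ℂ) : |Real.exp z.re - 1| ≤ ‖exp z - 1‖ := by
  simpa [norm_exp] using abs_norm_sub_norm_le (exp z) 1

lemma Complex.le_norm_exp_sub_one_of_le_re {t : ℝ} {z : ℂ} (h : t ≤ z.re) :
    t ≤ ‖exp z - 1‖ :=
  calc t ≤ Real.exp t - 1 := by linarith [Real.add_one_le_exp t]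
    _ ≤ Real.exp z.re - 1 := by gcongr
    _ ≤ |Real.exp z.re - 1| := le_abs_self _
    _ ≤ ‖exp z - 1‖ := abs_exp_re_sub_one_le z

lemma Complex.le_one_add_mul_norm_exp_sub_one_of_re_le {t : ℝ} (ht : 0 ≤ t) {z : ℂ}
    (h : z.re ≤ -t) : t ≤ (1 + t) * ‖exp z - 1‖ := by
  have hexp : (1 + t) * Real.exp (-t) ≤ 1 := by
    rw [Real.exp_neg, ← div_eq_mul_inv, div_le_one (Real.exp_pos t)]
    linarith [Real.add_one_le_exp t]
  have hnorm : 1 - Real.exp (-t) ≤ ‖exp z - 1‖ :=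
    calc 1 - Real.exp (-t) ≤ 1 - Real.exp z.re := by gcongr
      _ ≤ |Real.exp z.re - 1| := by rw [abs_sub_comm]; exact le_abs_self _
      _ ≤ ‖exp z - 1‖ := abs_exp_re_sub_one_le z
  calc t ≤ (1 + t) * (1 - Real.exp (-t)) := by linarith
    _ ≤ (1 + t) * ‖exp z - 1‖ := by gcongr

lemma Complex.norm_div_exp_sub_one_le_of_mul_norm_le_re {s : ℝ} (hs : 0 < s) {z : ℂ}
    (h : s * ‖z‖ ≤ z.re) : ‖z / (exp z - 1)‖ ≤ 1 / s := by
  rw [norm_div]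
  refine div_le_of_le_mul₀ (norm_nonneg _) (by positivity) ?_
  rw [one_div, ← div_eq_inv_mul, le_div_iff₀' hs]
  exact le_norm_exp_sub_one_of_le_re h

lemma Complex.norm_div_exp_sub_one_le_of_re_le_neg_mul_norm {s : ℝ} (hs : 0 < s) {z : ℂ}
    (h : z.re ≤ -(s * ‖z‖)) : ‖z / (exp z - 1)‖ ≤ ‖z‖ + 1 / s := by
  rw [norm_div]
  refine div_le_of_le_mul₀ (norm_nonneg _) (by positivity) ?_
  have hkey := le_one_add_mul_norm_exp_sub_one_of_re_le (by positivity) h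
  calc ‖z‖ = (s * ‖z‖) / s := by field_simp
    _ ≤ (1 + s * ‖z‖) * ‖exp z - 1‖ / s := by gcongr
    _ = (‖z‖ + 1 / s) * ‖exp z - 1‖ := by field_simp; ring

theorem P_bound_on_sector (ϰ : ℝ) (hϰ0 : 0 < ϰ) (hϰ : ϰ < π / 2) :
    ∃ C₁ > (0:ℝ), ∃ C₂ > (0:ℝ), ∀ z : ℂ, z ≠ 0 →
      ϰ ≤ |Complex.arg z - π / 2| → ϰ ≤ |Complex.arg z + π / 2| →
      Complex.exp z ≠ 1 →
      ‖z / (Complex.exp z - 1)‖ ≤ C₁ * ‖z‖ + C₂ := by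
  have hs : 0 < Real.sin ϰ := Real.sin_pos_of_pos_of_lt_pi hϰ0 (by linarith [Real.pi_pos])
  refine ⟨1, one_pos, 1 / Real.sin ϰ, by positivity, fun z _ h₁ h₂ _ => ?_⟩
  rw [one_mul]
  rcases le_abs'.mp (sin_mul_norm_le_abs_re hϰ0.le h₁ h₂) with hre | hre
  · exact norm_div_exp_sub_one_le_of_re_le_neg_mul_norm hs (by linarith)
  · exact (norm_div_exp_sub_one_le_of_mul_norm_le_re hs hre).trans
      (le_add_of_nonneg_left (norm_nonneg z))
end

section
/- Let d = π, λ₀ ∈ (1/4, 1), κ₁ = √(1 − λ₀), and let ψ : Π → ℝ be a smooth function on the strip Π = ℝ × (0, π), vanishing on the part Γ(a) of ∂Π, satisfying (Δ + λ₀)ψ = 0 on Π, with Neumann condition ∂ψ/∂x₂ = 0 on γ(a) = {(x₁, 0) : |x₁| < a}, and with the asymptotics ψ(x) = α e^{−κ₁|x₁|} sin x₂ + O(e^{−√(4−λ₀)|x₁|}) as |x₁| → ∞, together with corresponding decay of its gradient. Then α π √(1 − λ₀) = ∫_{−a}^{a} ψ(x₁, 0) e^{√(1−λ₀) x₁} dx₁.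 -/
set_option maxHeartbeats 1000000

open Real intervalIntegral

open MeasureTheory Filter Set in
private lemma my_leibniz (G G' : ℝ → ℝ → ℝ)
    (hG : Continuous fun p : ℝ × ℝ => G p.1 p.2)
    (hG' : Continuous fun p : ℝ × ℝ => G' p.1 p.2)
    (hdiff : ∀ x t : ℝ, HasDerivAt (fun y => G y t) (G' x t) x)
    (x₀ : ℝ) :
    HasDerivAt (fun x => ∫ t in (0:ℝ)..π, G x t) (∫ t in (0:ℝ)..π, G' x₀ t) x₀ := by
  have hK : IsCompact ((Icc (x₀ - 1) (x₀ + 1)) ×ˢ (Icc (0:ℝ) π)) :=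
    isCompact_Icc.prod isCompact_Icc
  obtain ⟨C, hC⟩ := hK.exists_bound_of_continuousOn hG'.continuousOn
  have main := intervalIntegral.hasDerivAt_integral_of_dominated_loc_of_deriv_le
    (F := G) (F' := G') (x₀ := x₀) (a := (0:ℝ)) (b := π) (μ := volume)
    (bound := fun _ => C) (Metric.ball_mem_nhds x₀ one_pos)
    (Filter.Eventually.of_forall fun x =>
      ((hG.comp (continuous_const.prodMk continuous_id)).aestronglyMeasurable))
    ((hG.comp (continuous_const.prodMk continuous_id)).intervalIntegrable 0 π)
    ((hG'.comp (continuous_const.prodMk continuous_id)).aestronglyMeasurable)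
    ?_ (intervalIntegrable_const) ?_
  · exact main.2
  · refine Filter.Eventually.of_forall fun t ht x hx => ?_
    have : ((x, t) : ℝ × ℝ) ∈ (Icc (x₀ - 1) (x₀ + 1)) ×ˢ (Icc (0:ℝ) π) := by
      constructor
      · have := Metric.mem_ball.mp hx
        rw [Real.dist_eq] at this
        constructor <;> [linarith [abs_le.mp this.le |>.1]; linarith [abs_le.mp this.le |>.2]]
      · have ht' : t ∈ Set.Ioc (0:ℝ) π := by
          simpa [Set.uIoc_of_le Real.pi_pos.le] using ht
        exact ⟨ht'.1.le, ht'.2⟩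
    exact hC (x, t) this
  · exact Filter.Eventually.of_forall fun t ht x hx => hdiff x t

private lemma my_fderiv_contDiff {f : ℝ × ℝ → ℝ} (hf : ContDiff ℝ (⊤ : ℕ∞) f) (v : ℝ × ℝ) :
    ContDiff ℝ (⊤ : ℕ∞) (fun p => fderiv ℝ f p v) := by
  have h1 : ContDiff ℝ (⊤ : ℕ∞) (fderiv ℝ f) := hf.fderiv_right (by simp)
  exact (ContinuousLinearMap.apply ℝ ℝ v).contDiff.comp h1

private lemma my_partial1 {f : ℝ × ℝ → ℝ} (hf : ContDiff ℝ (⊤ : ℕ∞) f) (x₁ x₂ : ℝ) :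
    HasDerivAt (fun s => f (s, x₂)) (fderiv ℝ f (x₁, x₂) (1, 0)) x₁ := by
  have hline : HasDerivAt (fun s : ℝ => ((s, x₂) : ℝ × ℝ)) ((1:ℝ), (0:ℝ)) x₁ :=
    (hasDerivAt_id x₁).prodMk (hasDerivAt_const x₁ x₂)
  exact (hf.differentiable (by simp) (x₁, x₂)).hasFDerivAt.comp_hasDerivAt x₁ hline

private lemma my_partial2 {f : ℝ × ℝ → ℝ} (hf : ContDiff ℝ (⊤ : ℕ∞) f) (x₁ x₂ : ℝ) :
    HasDerivAt (fun t => f (x₁, t)) (fderiv ℝ f (x₁, x₂) (0, 1)) x₂ := by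
  have hline : HasDerivAt (fun t : ℝ => ((x₁, t) : ℝ × ℝ)) ((0:ℝ), (1:ℝ)) x₂ :=
    (hasDerivAt_const x₂ x₁).prodMk (hasDerivAt_id x₂)
  exact (hf.differentiable (by simp) (x₁, x₂)).hasFDerivAt.comp_hasDerivAt x₂ hline

/-- Green's identity for an eigenfunction of the one-window strip:
`α π √(1-lam₀) = ∫_{-a}^{a} ψ(x₁,0) e^{√(1-lam₀) x₁} dx₁`. -/
theorem alpha_integral_identity (ψ : ℝ → ℝ → ℝ) (a lam₀ α : ℝ)
    (ha : 0 < a) (hlam1 : 1 / 4 < lam₀) (hlam2 : lam₀ < 1)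
    (hsmooth : ContDiff ℝ (⊤ : ℕ∞) (fun p : ℝ × ℝ => ψ p.1 p.2))
    (hpde : ∀ x₁ x₂ : ℝ, 0 < x₂ → x₂ < π →
      deriv (deriv (fun s => ψ s x₂)) x₁ + deriv (deriv (fun t => ψ x₁ t)) x₂
        + lam₀ * ψ x₁ x₂ = 0)
    (hdir0 : ∀ x₁ : ℝ, a ≤ |x₁| → ψ x₁ 0 = 0)
    (hdirπ : ∀ x₁ : ℝ, ψ x₁ π = 0)
    (hneu : ∀ x₁ : ℝ, |x₁| < a → deriv (fun t => ψ x₁ t) 0 = 0)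
    (hasym : ∃ C > (0:ℝ), ∀ x₁ x₂ : ℝ, 0 ≤ x₂ → x₂ ≤ π →
      |ψ x₁ x₂ - α * Real.exp (-(Real.sqrt (1 - lam₀)) * |x₁|) * Real.sin x₂| ≤
        C * Real.exp (-(Real.sqrt (4 - lam₀)) * |x₁|))
    (hasym' : ∃ C > (0:ℝ), ∀ x₁ x₂ : ℝ, 0 ≤ x₂ → x₂ ≤ π → 1 ≤ |x₁| →
      |deriv (fun s => ψ s x₂) x₁ +
          Real.sign x₁ * Real.sqrt (1 - lam₀) * α *
            Real.exp (-(Real.sqrt (1 - lam₀)) * |x₁|) * Real.sin x₂| ≤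
        C * Real.exp (-(Real.sqrt (4 - lam₀)) * |x₁|)) :
    α * π * Real.sqrt (1 - lam₀) =
      ∫ x₁ in (-a)..a, ψ x₁ 0 * Real.exp (Real.sqrt (1 - lam₀) * x₁) := by
  classical
  open MeasureTheory Filter Set in
  set κ := Real.sqrt (1 - lam₀) with hκdef
  set κ₂ := Real.sqrt (4 - lam₀) with hκ₂def
  have h1lam : (0:ℝ) < 1 - lam₀ := by linarith
  have hκpos : 0 < κ := Real.sqrt_pos.mpr h1lam
  have hκsq : κ ^ 2 = 1 - lam₀ := Real.sq_sqrt h1lam.le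
  have hκlt : κ < κ₂ := Real.sqrt_lt_sqrt h1lam.le (by linarith)
  -- partial derivatives
  set f : ℝ × ℝ → ℝ := fun p => ψ p.1 p.2 with hfdef
  set D1 : ℝ × ℝ → ℝ := fun p => fderiv ℝ f p (1, 0) with hD1def
  set D2 : ℝ × ℝ → ℝ := fun p => fderiv ℝ f p (0, 1) with hD2def
  have hD1cd : ContDiff ℝ (⊤ : ℕ∞) D1 := my_fderiv_contDiff hsmooth (1, 0)
  have hD2cd : ContDiff ℝ (⊤ : ℕ∞) D2 := my_fderiv_contDiff hsmooth (0, 1)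
  set D11 : ℝ × ℝ → ℝ := fun p => fderiv ℝ D1 p (1, 0) with hD11def
  set D22 : ℝ × ℝ → ℝ := fun p => fderiv ℝ D2 p (0, 1) with hD22def
  have hψ1 : ∀ x₁ x₂ : ℝ, HasDerivAt (fun s => ψ s x₂) (D1 (x₁, x₂)) x₁ := fun x₁ x₂ =>
    my_partial1 hsmooth x₁ x₂
  have hψ2 : ∀ x₁ x₂ : ℝ, HasDerivAt (fun t => ψ x₁ t) (D2 (x₁, x₂)) x₂ := fun x₁ x₂ =>
    my_partial2 hsmooth x₁ x₂
  have hψ11 : ∀ x₁ x₂ : ℝ, HasDerivAt (fun s => D1 (s, x₂)) (D11 (x₁, x₂)) x₁ := fun x₁ x₂ =>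
    my_partial1 hD1cd x₁ x₂
  have hψ22 : ∀ x₁ x₂ : ℝ, HasDerivAt (fun t => D2 (x₁, t)) (D22 (x₁, x₂)) x₂ := fun x₁ x₂ =>
    my_partial2 hD2cd x₁ x₂
  have hderiv1_eq : ∀ x₁ x₂ : ℝ, deriv (fun s => ψ s x₂) x₁ = D1 (x₁, x₂) := fun x₁ x₂ =>
    (hψ1 x₁ x₂).deriv
  have hpde' : ∀ x₁ x₂ : ℝ, 0 < x₂ → x₂ < π →
      D11 (x₁, x₂) + D22 (x₁, x₂) + lam₀ * ψ x₁ x₂ = 0 := by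
    intro x₁ x₂ h0 hπ
    have e1 : deriv (deriv (fun s => ψ s x₂)) x₁ = D11 (x₁, x₂) := by
      have : deriv (fun s => ψ s x₂) = fun s => D1 (s, x₂) :=
        funext fun s => (hψ1 s x₂).deriv
      rw [this]; exact (hψ11 x₁ x₂).deriv
    have e2 : deriv (deriv (fun t => ψ x₁ t)) x₂ = D22 (x₁, x₂) := by
      have : deriv (fun t => ψ x₁ t) = fun t => D2 (x₁, t) :=
        funext fun t => (hψ2 x₁ t).deriv
      rw [this]; exact (hψ22 x₁ x₂).deriv
    rw [← e1, ← e2]; exact hpde x₁ x₂ h0 hπ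
  -- continuity facts
  have hψcont : Continuous f := hsmooth.continuous
  have hD1cont : Continuous D1 := hD1cd.continuous
  have hD2cont : Continuous D2 := hD2cd.continuous
  have hD11cont : Continuous D11 := (my_fderiv_contDiff hD1cd (1, 0)).continuous
  have hD22cont : Continuous D22 := (my_fderiv_contDiff hD2cd (0, 1)).continuous
  have contx : ∀ (g : ℝ × ℝ → ℝ), Continuous g → ∀ x : ℝ, Continuous fun t => g (x, t) :=
    fun g hg x => hg.comp (continuous_const.prodMk continuous_id)
  -- the Fourier coefficient F and its derivatives
  set F : ℝ → ℝ := fun x => ∫ t in (0:ℝ)..π, Real.sin t * ψ x t with hFdef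
  set F1 : ℝ → ℝ := fun x => ∫ t in (0:ℝ)..π, Real.sin t * D1 (x, t) with hF1def
  set F2 : ℝ → ℝ := fun x => ∫ t in (0:ℝ)..π, Real.sin t * D11 (x, t) with hF2def
  have hsin2 : Continuous fun p : ℝ × ℝ => Real.sin p.2 := Real.continuous_sin.comp continuous_snd
  have hF' : ∀ x : ℝ, HasDerivAt F (F1 x) x := by
    intro x
    exact my_leibniz (fun x t => Real.sin t * ψ x t) (fun x t => Real.sin t * D1 (x, t))
      (hsin2.mul hψcont) (hsin2.mul hD1cont)
      (fun x t => (hψ1 x t).const_mul _) x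
  have hF1' : ∀ x : ℝ, HasDerivAt F1 (F2 x) x := by
    intro x
    exact my_leibniz (fun x t => Real.sin t * D1 (x, t)) (fun x t => Real.sin t * D11 (x, t))
      (hsin2.mul hD1cont) (hsin2.mul hD11cont)
      (fun x t => (hψ11 x t).const_mul _) x
  -- integration by parts in the vertical variable
  have hIBP : ∀ x : ℝ, ∫ t in (0:ℝ)..π, Real.sin t * D22 (x, t) = ψ x 0 - F x := by
    intro x
    have hint1 : IntervalIntegrable (fun t => Real.cos t) volume 0 π :=
      Real.continuous_cos.intervalIntegrable 0 π
    have hint2 : IntervalIntegrable (fun t => D22 (x, t)) volume 0 π :=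
      (contx _ hD22cont x).intervalIntegrable 0 π
    have hint3 : IntervalIntegrable (fun t => -Real.sin t) volume 0 π :=
      (Real.continuous_sin.neg).intervalIntegrable 0 π
    have hint4 : IntervalIntegrable (fun t => D2 (x, t)) volume 0 π :=
      (contx _ hD2cont x).intervalIntegrable 0 π
    have step1 : ∫ t in (0:ℝ)..π, Real.sin t * D22 (x, t) =
        Real.sin π * D2 (x, π) - Real.sin 0 * D2 (x, 0) -
          ∫ t in (0:ℝ)..π, Real.cos t * D2 (x, t) :=
      intervalIntegral.integral_mul_deriv_eq_deriv_mul
        (fun t _ => Real.hasDerivAt_sin t) (fun t _ => hψ22 x t) hint1 hint2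
    have step2 : ∫ t in (0:ℝ)..π, Real.cos t * D2 (x, t) =
        Real.cos π * ψ x π - Real.cos 0 * ψ x 0 -
          ∫ t in (0:ℝ)..π, (-Real.sin t) * ψ x t :=
      intervalIntegral.integral_mul_deriv_eq_deriv_mul
        (fun t _ => Real.hasDerivAt_cos t) (fun t _ => hψ2 x t) hint3 hint4
    have e3 : ∫ t in (0:ℝ)..π, (-Real.sin t) * ψ x t = -F x := by
      rw [hFdef]
      rw [← intervalIntegral.integral_neg]
      congr 1; funext t; ring
    rw [step1, step2, e3, hdirπ x]
    simp [Real.sin_pi, Real.cos_pi]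
    ring
  -- F'' = (1-λ₀) F - g
  have hF2eq : ∀ x : ℝ, F2 x = (1 - lam₀) * F x - ψ x 0 := by
    intro x
    have hcong : F2 x = ∫ t in (0:ℝ)..π,
        (-(Real.sin t * D22 (x, t)) - lam₀ * (Real.sin t * ψ x t)) := by
      rw [hF2def]
      apply intervalIntegral.integral_congr_ae
      have hπne : ∀ᵐ t : ℝ ∂volume, t ≠ π := by
        have : (volume : Measure ℝ) {π} = 0 := Real.volume_singleton
        exact MeasureTheory.ae_iff.mpr (by simpa using this)
      filter_upwards [hπne] with t htne hmem
      have hmem' : t ∈ Set.Ioc (0:ℝ) π := by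
        simpa [Set.uIoc_of_le Real.pi_pos.le] using hmem
      have h0t : 0 < t := hmem'.1
      have htπ : t < π := lt_of_le_of_ne hmem'.2 htne
      have := hpde' x t h0t htπ
      have hD11v : D11 (x, t) = -D22 (x, t) - lam₀ * ψ x t := by linarith
      rw [hD11v]; ring
    rw [hcong, intervalIntegral.integral_sub, intervalIntegral.integral_neg,
      intervalIntegral.integral_const_mul, hIBP x]
    · rw [hFdef]; ring
    · exact ((Real.continuous_sin.mul (contx _ hD22cont x)).neg).intervalIntegrable 0 π
    · exact (continuous_const.mul (Real.continuous_sin.mul (contx _ hψcont x))).intervalIntegrable 0 π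
  -- the function h and its derivative
  set h : ℝ → ℝ := fun x => (F1 x - κ * F x) * Real.exp (κ * x) with hhdef
  have hh : ∀ x : ℝ, HasDerivAt h (-(ψ x 0 * Real.exp (κ * x))) x := by
    intro x
    have h1 : HasDerivAt (fun x => F1 x - κ * F x) (F2 x - κ * F1 x) x :=
      (hF1' x).sub ((hF' x).const_mul κ)
    have h2 : HasDerivAt (fun x => Real.exp (κ * x)) (Real.exp (κ * x) * κ) x := by
      simpa using ((hasDerivAt_id x).const_mul κ).exp
    have h3 := h1.mul h2
    refine h3.congr_deriv ?_
    symm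
    rw [hF2eq x]
    linear_combination (F x * Real.exp (κ * x)) * hκsq
  have hgecont : Continuous fun x : ℝ => ψ x 0 * Real.exp (κ * x) :=
    ((hψcont.comp (continuous_id.prodMk continuous_const)).mul
      (Real.continuous_exp.comp (continuous_const.mul continuous_id)))
  -- FTC
  have hFTC : ∀ R : ℝ, ∫ x in (-R)..R, ψ x 0 * Real.exp (κ * x) = h (-R) - h R := by
    intro R
    have := intervalIntegral.integral_eq_sub_of_hasDerivAt (f := h)
      (f' := fun x => -(ψ x 0 * Real.exp (κ * x))) (a := -R) (b := R)
      (fun x _ => hh x) (hgecont.neg.intervalIntegrable _ _)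
    rw [intervalIntegral.integral_neg] at this
    linarith
  -- truncation
  have htrunc : ∀ R : ℝ, a ≤ R →
      (∫ x in (-R)..R, ψ x 0 * Real.exp (κ * x)) =
        ∫ x in (-a)..a, ψ x 0 * Real.exp (κ * x) := by
    intro R hR
    have hint : ∀ u v : ℝ, IntervalIntegrable (fun x => ψ x 0 * Real.exp (κ * x)) volume u v :=
      fun u v => hgecont.intervalIntegrable u v
    have hz1 : (∫ x in (-R)..(-a), ψ x 0 * Real.exp (κ * x)) = 0 := by
      rw [intervalIntegral.integral_congr (g := fun _ => (0:ℝ)) ?_, intervalIntegral.integral_zero]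
      intro x hx
      rw [Set.uIcc_of_le (by linarith)] at hx
      have : a ≤ |x| := by
        rcases hx with ⟨h1, h2⟩
        rw [abs_of_nonpos (by linarith)]
        linarith
      simp [hdir0 x this]
    have hz2 : (∫ x in a..R, ψ x 0 * Real.exp (κ * x)) = 0 := by
      rw [intervalIntegral.integral_congr (g := fun _ => (0:ℝ)) ?_, intervalIntegral.integral_zero]
      intro x hx
      rw [Set.uIcc_of_le (by linarith)] at hx
      have : a ≤ |x| := by
        rcases hx with ⟨h1, h2⟩
        rw [abs_of_nonneg (by linarith)]
        linarith
      simp [hdir0 x this]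
    have e1 := intervalIntegral.integral_add_adjacent_intervals (a := -R) (b := -a) (c := a)
      (hint _ _) (hint _ _)
    have e2 := intervalIntegral.integral_add_adjacent_intervals (a := -R) (b := a) (c := R)
      (hint _ _) (hint _ _)
    rw [hz1] at e1
    rw [hz2] at e2
    linarith
  -- quantitative bounds on F and F1
  obtain ⟨C, hCpos, hC⟩ := hasym
  obtain ⟨C', hC'pos, hC'⟩ := hasym'
  have hsinsq : ∫ t in (0:ℝ)..π, Real.sin t * Real.sin t = π / 2 := by
    have h0 : (fun t => Real.sin t * Real.sin t) = fun t => Real.sin t ^ 2 := by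
      funext t; ring
    rw [h0, integral_sin_sq]
    simp
  have habs_sin : ∀ t : ℝ, |Real.sin t| ≤ 1 := fun t =>
    abs_le.mpr ⟨Real.neg_one_le_sin t, Real.sin_le_one t⟩
  have hFb : ∀ x : ℝ, |F x - α * Real.exp (-κ * |x|) * (π / 2)| ≤
      C * π * Real.exp (-κ₂ * |x|) := by
    intro x
    have heq : F x - α * Real.exp (-κ * |x|) * (π / 2) =
        ∫ t in (0:ℝ)..π, Real.sin t * (ψ x t - α * Real.exp (-κ * |x|) * Real.sin t) := by
      have hint1 : IntervalIntegrable (fun t => Real.sin t * ψ x t) volume 0 π :=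
        ((hsin2.mul hψcont).comp (continuous_const.prodMk continuous_id)).intervalIntegrable 0 π
      have hint2 : IntervalIntegrable
          (fun t => Real.sin t * (α * Real.exp (-κ * |x|) * Real.sin t)) volume 0 π := by
        exact (Real.continuous_sin.mul (continuous_const.mul Real.continuous_sin)).intervalIntegrable 0 π
      have : (fun t => Real.sin t * (ψ x t - α * Real.exp (-κ * |x|) * Real.sin t)) =
          fun t => Real.sin t * ψ x t -
            Real.sin t * (α * Real.exp (-κ * |x|) * Real.sin t) := by
        funext t; ring
      rw [this, intervalIntegral.integral_sub hint1 hint2]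
      have e2 : ∫ t in (0:ℝ)..π, Real.sin t * (α * Real.exp (-κ * |x|) * Real.sin t) =
          α * Real.exp (-κ * |x|) * (π / 2) := by
        have : (fun t => Real.sin t * (α * Real.exp (-κ * |x|) * Real.sin t)) =
            fun t => α * Real.exp (-κ * |x|) * (Real.sin t * Real.sin t) := by
          funext t; ring
        rw [this, intervalIntegral.integral_const_mul, hsinsq]
      rw [e2, hFdef]
    rw [heq]
    have hbd := intervalIntegral.norm_integral_le_of_norm_le_const
      (C := C * Real.exp (-κ₂ * |x|)) (a := (0:ℝ)) (b := π)
      (f := fun t => Real.sin t * (ψ x t - α * Real.exp (-κ * |x|) * Real.sin t)) ?_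
    · rw [Real.norm_eq_abs] at hbd
      calc |∫ t in (0:ℝ)..π, Real.sin t * (ψ x t - α * Real.exp (-κ * |x|) * Real.sin t)|
          ≤ C * Real.exp (-κ₂ * |x|) * |π - 0| := hbd
        _ = C * π * Real.exp (-κ₂ * |x|) := by
            rw [sub_zero, abs_of_pos Real.pi_pos]; ring
    · intro t ht
      have ht' : t ∈ Set.Ioc (0:ℝ) π := by
        simpa [Set.uIoc_of_le Real.pi_pos.le] using ht
      have := hC x t ht'.1.le ht'.2
      rw [Real.norm_eq_abs, abs_mul]
      calc |Real.sin t| * |ψ x t - α * Real.exp (-κ * |x|) * Real.sin t|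
          ≤ 1 * (C * Real.exp (-κ₂ * |x|)) := by
            apply mul_le_mul (habs_sin t) ?_ (abs_nonneg _) zero_le_one
            convert this using 3
        _ = C * Real.exp (-κ₂ * |x|) := one_mul _
  have hF1b : ∀ x : ℝ, 1 ≤ |x| →
      |F1 x + Real.sign x * κ * α * Real.exp (-κ * |x|) * (π / 2)| ≤
        C' * π * Real.exp (-κ₂ * |x|) := by
    intro x hx
    have heq : F1 x + Real.sign x * κ * α * Real.exp (-κ * |x|) * (π / 2) =
        ∫ t in (0:ℝ)..π, Real.sin t *
          (D1 (x, t) + Real.sign x * κ * α * Real.exp (-κ * |x|) * Real.sin t) := by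
      have hint1 : IntervalIntegrable (fun t => Real.sin t * D1 (x, t)) volume 0 π :=
        ((hsin2.mul hD1cont).comp (continuous_const.prodMk continuous_id)).intervalIntegrable 0 π
      have hint2 : IntervalIntegrable
          (fun t => Real.sin t * (Real.sign x * κ * α * Real.exp (-κ * |x|) * Real.sin t))
          volume 0 π := by
        exact (Real.continuous_sin.mul (continuous_const.mul Real.continuous_sin)).intervalIntegrable 0 π
      have : (fun t => Real.sin t *
          (D1 (x, t) + Real.sign x * κ * α * Real.exp (-κ * |x|) * Real.sin t)) =
          fun t => Real.sin t * D1 (x, t) +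
            Real.sin t * (Real.sign x * κ * α * Real.exp (-κ * |x|) * Real.sin t) := by
        funext t; ring
      rw [this, intervalIntegral.integral_add hint1 hint2]
      have e2 : ∫ t in (0:ℝ)..π,
          Real.sin t * (Real.sign x * κ * α * Real.exp (-κ * |x|) * Real.sin t) =
          Real.sign x * κ * α * Real.exp (-κ * |x|) * (π / 2) := by
        have : (fun t => Real.sin t *
            (Real.sign x * κ * α * Real.exp (-κ * |x|) * Real.sin t)) =
            fun t => Real.sign x * κ * α * Real.exp (-κ * |x|) * (Real.sin t * Real.sin t) := by
          funext t; ring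
        rw [this, intervalIntegral.integral_const_mul, hsinsq]
      rw [e2, hF1def]
    rw [heq]
    have hbd := intervalIntegral.norm_integral_le_of_norm_le_const
      (C := C' * Real.exp (-κ₂ * |x|)) (a := (0:ℝ)) (b := π)
      (f := fun t => Real.sin t *
        (D1 (x, t) + Real.sign x * κ * α * Real.exp (-κ * |x|) * Real.sin t)) ?_
    · rw [Real.norm_eq_abs] at hbd
      calc |∫ t in (0:ℝ)..π, Real.sin t *
            (D1 (x, t) + Real.sign x * κ * α * Real.exp (-κ * |x|) * Real.sin t)|
          ≤ C' * Real.exp (-κ₂ * |x|) * |π - 0| := hbd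
        _ = C' * π * Real.exp (-κ₂ * |x|) := by
            rw [sub_zero, abs_of_pos Real.pi_pos]; ring
    · intro t ht
      have ht' : t ∈ Set.Ioc (0:ℝ) π := by
        simpa [Set.uIoc_of_le Real.pi_pos.le] using ht
      have h0 := hC' x t ht'.1.le ht'.2 hx
      rw [hderiv1_eq x t] at h0
      rw [Real.norm_eq_abs, abs_mul]
      calc |Real.sin t| * |D1 (x, t) + Real.sign x * κ * α * Real.exp (-κ * |x|) * Real.sin t|
          ≤ 1 * (C' * Real.exp (-κ₂ * |x|)) := by
            apply mul_le_mul (habs_sin t) ?_ (abs_nonneg _) zero_le_one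
            convert h0 using 3
        _ = C' * Real.exp (-κ₂ * |x|) := one_mul _
  -- limits of h at ±∞
  set B : ℝ → ℝ := fun R => (C' * π + κ * (C * π)) * Real.exp ((κ - κ₂) * R) with hBdef
  have hBtend : Tendsto B atTop (nhds 0) := by
    have h1 : Tendsto (fun R : ℝ => (κ - κ₂) * R) atTop atBot :=
      Tendsto.const_mul_atTop_of_neg (by linarith) tendsto_id
    have h2 : Tendsto (fun R : ℝ => Real.exp ((κ - κ₂) * R)) atTop (nhds 0) :=
      Real.tendsto_exp_atBot.comp h1
    simpa using h2.const_mul (C' * π + κ * (C * π))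
  have hbound_both : ∀ R : ℝ, 1 ≤ R →
      |F1 R + κ * α * Real.exp (-κ * R) * (π / 2)| ≤ C' * π * Real.exp (-κ₂ * R) ∧
      |F R - α * Real.exp (-κ * R) * (π / 2)| ≤ C * π * Real.exp (-κ₂ * R) ∧
      |F1 (-R) - κ * α * Real.exp (-κ * R) * (π / 2)| ≤ C' * π * Real.exp (-κ₂ * R) ∧
      |F (-R) - α * Real.exp (-κ * R) * (π / 2)| ≤ C * π * Real.exp (-κ₂ * R) := by
    intro R hR
    have hRpos : (0:ℝ) < R := by linarith
    have habsR : |R| = R := abs_of_pos hRpos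
    have habsnR : |(-R : ℝ)| = R := by rw [abs_neg]; exact habsR
    have hsgnR : Real.sign R = 1 := Real.sign_of_pos hRpos
    have hsgnnR : Real.sign (-R : ℝ) = -1 := Real.sign_of_neg (by linarith)
    refine ⟨?_, ?_, ?_, ?_⟩
    · have := hF1b R (by rw [habsR]; exact hR)
      rw [habsR, hsgnR] at this
      have e : F1 R + 1 * κ * α * Real.exp (-κ * R) * (π / 2) =
          F1 R + κ * α * Real.exp (-κ * R) * (π / 2) := by ring
      rwa [e] at this
    · have := hFb R
      rw [habsR] at this
      exact this
    · have := hF1b (-R) (by rw [habsnR]; exact hR)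
      rw [habsnR, hsgnnR] at this
      have e : F1 (-R) + -1 * κ * α * Real.exp (-κ * R) * (π / 2) =
          F1 (-R) - κ * α * Real.exp (-κ * R) * (π / 2) := by ring
      rwa [e] at this
    · have := hFb (-R)
      rw [habsnR] at this
      exact this
  have htend1 : Tendsto (fun R => h R) atTop (nhds (-(α * π * κ))) := by
    have key : ∀ R : ℝ, 1 ≤ R → |h R - -(α * π * κ)| ≤ B R := by
      intro R hR
      obtain ⟨hb1, hb2, -, -⟩ := hbound_both R hR
      have hee : Real.exp (-κ * R) * Real.exp (κ * R) = 1 := by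
        rw [← Real.exp_add]; ring_nf; exact Real.exp_zero
      have hrw : h R - -(α * π * κ) =
          ((F1 R + κ * α * Real.exp (-κ * R) * (π / 2)) -
            κ * (F R - α * Real.exp (-κ * R) * (π / 2))) * Real.exp (κ * R) := by
        rw [hhdef]
        linear_combination (-(α * π * κ)) * hee
      rw [hrw]
      have hE : Real.exp (-κ₂ * R) * Real.exp (κ * R) = Real.exp ((κ - κ₂) * R) := by
        rw [← Real.exp_add]; ring_nf
      calc |((F1 R + κ * α * Real.exp (-κ * R) * (π / 2)) -
            κ * (F R - α * Real.exp (-κ * R) * (π / 2))) * Real.exp (κ * R)|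
          = |(F1 R + κ * α * Real.exp (-κ * R) * (π / 2)) -
            κ * (F R - α * Real.exp (-κ * R) * (π / 2))| * Real.exp (κ * R) := by
            rw [abs_mul, abs_of_pos (Real.exp_pos _)]
        _ ≤ (C' * π * Real.exp (-κ₂ * R) + κ * (C * π * Real.exp (-κ₂ * R))) *
            Real.exp (κ * R) := by
            apply mul_le_mul_of_nonneg_right ?_ (Real.exp_pos _).le
            calc |(F1 R + κ * α * Real.exp (-κ * R) * (π / 2)) -
                  κ * (F R - α * Real.exp (-κ * R) * (π / 2))|
                ≤ |F1 R + κ * α * Real.exp (-κ * R) * (π / 2)| +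
                  |κ * (F R - α * Real.exp (-κ * R) * (π / 2))| := abs_sub _ _
              _ ≤ C' * π * Real.exp (-κ₂ * R) + κ * (C * π * Real.exp (-κ₂ * R)) := by
                  rw [abs_mul, abs_of_pos hκpos]
                  exact add_le_add hb1 (mul_le_mul_of_nonneg_left hb2 hκpos.le)
        _ = (C' * π + κ * (C * π)) * Real.exp ((κ - κ₂) * R) := by rw [← hE]; ring
        _ = B R := rfl
    have hz : Tendsto (fun R => h R - -(α * π * κ)) atTop (nhds 0) := by
      apply squeeze_zero_norm' ?_ hBtend
      filter_upwards [eventually_ge_atTop (1:ℝ)] with R hR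
      exact key R hR
    have := hz.add_const (-(α * π * κ))
    simpa using this
  have htend2 : Tendsto (fun R => h (-R)) atTop (nhds 0) := by
    have key : ∀ R : ℝ, 1 ≤ R → |h (-R)| ≤ B R := by
      intro R hR
      obtain ⟨-, -, hb3, hb4⟩ := hbound_both R hR
      have hrw : h (-R) =
          ((F1 (-R) - κ * α * Real.exp (-κ * R) * (π / 2)) -
            κ * (F (-R) - α * Real.exp (-κ * R) * (π / 2))) * Real.exp (κ * (-R)) := by
        rw [hhdef]; ring
      rw [hrw]
      have hEle : Real.exp (-κ₂ * R) * Real.exp (κ * (-R)) ≤ Real.exp ((κ - κ₂) * R) := by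
        rw [← Real.exp_add]
        apply Real.exp_le_exp.mpr
        nlinarith [hκpos.le]
      calc |((F1 (-R) - κ * α * Real.exp (-κ * R) * (π / 2)) -
            κ * (F (-R) - α * Real.exp (-κ * R) * (π / 2))) * Real.exp (κ * (-R))|
          = |(F1 (-R) - κ * α * Real.exp (-κ * R) * (π / 2)) -
            κ * (F (-R) - α * Real.exp (-κ * R) * (π / 2))| * Real.exp (κ * (-R)) := by
            rw [abs_mul, abs_of_pos (Real.exp_pos _)]
        _ ≤ (C' * π * Real.exp (-κ₂ * R) + κ * (C * π * Real.exp (-κ₂ * R))) *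
            Real.exp (κ * (-R)) := by
            apply mul_le_mul_of_nonneg_right ?_ (Real.exp_pos _).le
            calc |(F1 (-R) - κ * α * Real.exp (-κ * R) * (π / 2)) -
                  κ * (F (-R) - α * Real.exp (-κ * R) * (π / 2))|
                ≤ |F1 (-R) - κ * α * Real.exp (-κ * R) * (π / 2)| +
                  |κ * (F (-R) - α * Real.exp (-κ * R) * (π / 2))| := abs_sub _ _
              _ ≤ C' * π * Real.exp (-κ₂ * R) + κ * (C * π * Real.exp (-κ₂ * R)) := by
                  rw [abs_mul, abs_of_pos hκpos]
                  exact add_le_add hb3 (mul_le_mul_of_nonneg_left hb4 hκpos.le)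
        _ ≤ B R := by
            show _ ≤ (C' * π + κ * (C * π)) * Real.exp ((κ - κ₂) * R)
            have hnn : (0:ℝ) ≤ C' * π + κ * (C * π) := by positivity
            calc (C' * π * Real.exp (-κ₂ * R) + κ * (C * π * Real.exp (-κ₂ * R))) *
                Real.exp (κ * (-R))
                = (C' * π + κ * (C * π)) * (Real.exp (-κ₂ * R) * Real.exp (κ * (-R))) := by ring
              _ ≤ (C' * π + κ * (C * π)) * Real.exp ((κ - κ₂) * R) :=
                  mul_le_mul_of_nonneg_left hEle hnn
    apply squeeze_zero_norm' ?_ hBtend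
    filter_upwards [eventually_ge_atTop (1:ℝ)] with R hR
    exact key R hR
  -- conclude
  have hfin : Tendsto (fun R => h (-R) - h R) atTop (nhds (0 - -(α * π * κ))) :=
    htend2.sub htend1
  have hconst : (fun R : ℝ => h (-R) - h R) =ᶠ[atTop]
      fun _ => ∫ x in (-a)..a, ψ x 0 * Real.exp (κ * x) := by
    filter_upwards [eventually_ge_atTop a] with R hR
    rw [← hFTC R, htrunc R hR]
  have hlim : Tendsto (fun _ : ℝ => ∫ x in (-a)..a, ψ x 0 * Real.exp (κ * x)) atTop
      (nhds (0 - -(α * π * κ))) := hfin.congr' hconst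
  have := tendsto_nhds_unique hlim tendsto_const_nhds
  linarith [this]
end

section
/- Suppose κ = κ(l) > 0 satisfies, for all large l, the equation κ e^{κl}/cosh(κl) = c e^{−√3 l}/cosh(√3 l) + r(l) where c > 0 and |r(l)| ≤ C(κ² e^{−2κl}/cosh²(κl) + κ³ + κ² e^{−2√3 l} + e^{−2√8 l}), and suppose κ(l) → 0 as l → ∞. Then there exist constants C₁, C₂ > 0 such that C₁ e^{−2√3 l} ≤ κ(l) ≤ C₂ e^{−2√3 l} for all large l, and moreover κ(l) = 2c e^{−2√3 l} + O(e^{−2√8 l}) as l → ∞. -/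
open Real Filter Topology Asymptotics

/-!
Write `E = e^{-2√3 l}` and `F = e^{-2√8 l}`. Since `e^x / cosh x = 2 / (1 + e^{-2x})` lies
in `[1, 1 + 2x]` for `x ≥ 0` and `e^{-x} / cosh x = 2e^{-2x} + O(e^{-4x})`, the equation reads
`κ (1 + O(κ l)) = 2c E + O(E²) + O(κ² + F)`. As `κ → 0` the `κ²` term is absorbed into the
left side, so `κ = O(E)`. Feeding this back, every error term is `O(E² l + F) = O(F)` because
`√8 < 2√3`; and as `√3 < √8`, `F = o(E)`, so `κ - 2cE = o(E)` gives `cE ≤ κ ≤ 3cE`.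
-/

lemma exp_div_cosh_eq (x : ℝ) : exp x / cosh x = 2 / (1 + exp (-2 * x)) := by
  have h : exp x * exp (-2 * x) = exp (-x) := by rw [← exp_add]; ring_nf
  rw [cosh_eq, ← h]
  field_simp

lemma one_le_exp_div_cosh {x : ℝ} (hx : 0 ≤ x) : 1 ≤ exp x / cosh x := by
  have hu : exp (-2 * x) ≤ 1 := exp_le_one_iff.2 (by linarith)
  rw [exp_div_cosh_eq, le_div_iff₀ (by positivity)]
  linarith

lemma exp_div_cosh_sub_one_le {x : ℝ} (hx : 0 ≤ x) : exp x / cosh x - 1 ≤ 2 * x := by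
  have hu := add_one_le_exp (-2 * x)
  have hxu := mul_nonneg hx (exp_pos (-2 * x)).le
  rw [exp_div_cosh_eq, div_sub_one (by positivity), div_le_iff₀ (by positivity)]
  linarith

lemma exp_neg_div_cosh_sub_eq (x : ℝ) :
    exp (-x) / cosh x - 2 * exp (-2 * x) = -(2 * exp (-2 * x) ^ 2 / (1 + exp (-2 * x))) := by
  have h : exp (-x) = exp (-2 * x) * exp x := by rw [← exp_add]; ring_nf
  rw [h, mul_div_assoc, exp_div_cosh_eq]
  field_simp
  ring

lemma exp_neg_div_cosh_le (x : ℝ) : exp (-x) / cosh x ≤ 2 * exp (-2 * x) := by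
  have h := exp_neg_div_cosh_sub_eq x
  have : 0 ≤ 2 * exp (-2 * x) ^ 2 / (1 + exp (-2 * x)) := by positivity
  linarith

lemma abs_exp_neg_div_cosh_sub_le (x : ℝ) :
    |exp (-x) / cosh x - 2 * exp (-2 * x)| ≤ 2 * exp (-2 * x) ^ 2 := by
  rw [exp_neg_div_cosh_sub_eq, abs_neg, abs_of_nonneg (by positivity)]
  exact div_le_self (by positivity) (by linarith [exp_pos (-2 * x)])

lemma isBigO_pow_mul_sq_exp {a b : ℝ} (hb : b < 2 * a) (k : ℕ) :
    (fun l : ℝ => l ^ k * exp (-2 * a * l) ^ 2) =O[atTop] fun l => exp (-2 * b * l) := by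
  refine ((isLittleO_pow_exp_pos_mul_atTop k (by linarith : 0 < 4 * a - 2 * b)).isBigO.mul
    (isBigO_refl (fun l : ℝ => exp (-2 * a * l) ^ 2) atTop)).congr_right fun l => ?_
  rw [sq, ← exp_add, ← exp_add]
  ring_nf

section ImplicitEquation

variable {a b c C : ℝ} {κ r : ℝ → ℝ}

lemma remainder_isBigO_sq_add_exp (ha : 0 ≤ a) (hC : 0 ≤ C) (hpos : ∀ᶠ l in atTop, 0 < κ l)
    (hκ0 : Tendsto κ atTop (𝓝 0))
    (hr : ∀ᶠ l in atTop, |r l| ≤ C *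
      ((κ l) ^ 2 * exp (-2 * κ l * l) / (cosh (κ l * l)) ^ 2
        + (κ l) ^ 3 + (κ l) ^ 2 * exp (-2 * a * l) + exp (-2 * b * l))) :
    r =O[atTop] fun l => κ l ^ 2 + exp (-2 * b * l) := by
  refine IsBigO.of_bound (3 * C) ?_
  filter_upwards [hpos, hr, hκ0.eventually_le_const one_pos, eventually_ge_atTop 0]
    with l hκ hrl hκ1 hl
  have hκl : 0 ≤ κ l * l := mul_nonneg hκ.le hl
  have h₁ : κ l ^ 2 * exp (-2 * κ l * l) / cosh (κ l * l) ^ 2 ≤ κ l ^ 2 :=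
    (div_le_self (by positivity) (one_le_pow₀ (one_le_cosh _))).trans
      (mul_le_of_le_one_right (sq_nonneg _) (exp_le_one_iff.2 (by linarith)))
  have h₂ : κ l ^ 3 ≤ κ l ^ 2 := pow_le_pow_of_le_one hκ.le hκ1 (by norm_num)
  have h₃ : κ l ^ 2 * exp (-2 * a * l) ≤ κ l ^ 2 :=
    mul_le_of_le_one_right (sq_nonneg _) (exp_le_one_iff.2 (by nlinarith))
  have hF := exp_pos (-2 * b * l)
  rw [Real.norm_eq_abs, Real.norm_eq_abs,
    abs_of_pos (by positivity : 0 < κ l ^ 2 + exp (-2 * b * l))]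
  calc |r l| ≤ C * (3 * κ l ^ 2 + exp (-2 * b * l)) := by
        refine hrl.trans (mul_le_mul_of_nonneg_left ?_ hC); linarith
    _ ≤ 3 * C * (κ l ^ 2 + exp (-2 * b * l)) := by nlinarith

lemma isBigO_exp_of_implicit_eq (hc : 0 ≤ c) (hab : a ≤ b) (hpos : ∀ᶠ l in atTop, 0 < κ l)
    (hκ0 : Tendsto κ atTop (𝓝 0))
    (heq : ∀ᶠ l in atTop, κ l * exp (κ l * l) / cosh (κ l * l) =
      c * exp (-a * l) / cosh (a * l) + r l)
    (hr : r =O[atTop] fun l => κ l ^ 2 + exp (-2 * b * l)) :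
    κ =O[atTop] fun l => exp (-2 * a * l) := by
  obtain ⟨K, hK, hrK⟩ := hr.exists_pos
  refine IsBigO.of_bound (4 * c + 2 * K) ?_
  filter_upwards [hpos, heq, hrK.bound,
    hκ0.eventually_le_const (by positivity : 0 < 1 / (2 * K)), eventually_ge_atTop 0]
    with l hκ hl hrl hκK hl0
  have hA : κ l ≤ κ l * exp (κ l * l) / cosh (κ l * l) := by
    rw [mul_div_assoc]; exact le_mul_of_one_le_right hκ.le (one_le_exp_div_cosh (by positivity))
  have hB : c * exp (-a * l) / cosh (a * l) ≤ c * (2 * exp (-2 * a * l)) := by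
    rw [mul_div_assoc, neg_mul, mul_assoc]
    exact mul_le_mul_of_nonneg_left (exp_neg_div_cosh_le _) hc
  have hFE : exp (-2 * b * l) ≤ exp (-2 * a * l) := exp_le_exp.2 (by nlinarith)
  have hKκ : K * κ l ≤ 1 / 2 := by rw [le_div_iff₀ (by positivity)] at hκK; linarith
  rw [Real.norm_eq_abs, norm_of_nonneg (by positivity : 0 ≤ κ l ^ 2 + exp (-2 * b * l))] at hrl
  have hrκ : r l ≤ κ l / 2 + K * exp (-2 * a * l) := by
    nlinarith [le_abs_self (r l), mul_le_mul_of_nonneg_right hKκ hκ.le]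
  rw [norm_of_nonneg hκ.le, norm_of_nonneg (exp_pos _).le]
  linarith

lemma isBigO_sub_of_implicit_eq (hb : b < 2 * a) (hpos : ∀ᶠ l in atTop, 0 < κ l)
    (heq : ∀ᶠ l in atTop, κ l * exp (κ l * l) / cosh (κ l * l) =
      c * exp (-a * l) / cosh (a * l) + r l)
    (hr : r =O[atTop] fun l => κ l ^ 2 + exp (-2 * b * l))
    (hκ : κ =O[atTop] fun l => exp (-2 * a * l)) :
    (fun l => κ l - 2 * c * exp (-2 * a * l)) =O[atTop] fun l => exp (-2 * b * l) := by
  have hE2 : (fun l => exp (-2 * a * l) ^ 2) =O[atTop] fun l => exp (-2 * b * l) := by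
    simpa using isBigO_pow_mul_sq_exp hb 0
  have hκ2 : (fun l => κ l ^ 2) =O[atTop] fun l => exp (-2 * a * l) ^ 2 := hκ.pow 2
  have hA : (fun l => κ l * (exp (κ l * l) / cosh (κ l * l) - 1)) =O[atTop]
      fun l => exp (-2 * b * l) := by
    refine (IsBigO.of_bound 2 ?_ : _ =O[atTop] fun l => l ^ 1 * κ l ^ 2).trans
      (((isBigO_refl _ _).mul hκ2).trans (isBigO_pow_mul_sq_exp hb 1))
    filter_upwards [hpos, eventually_ge_atTop 0] with l hκ hl
    have hκl : 0 ≤ κ l * l := mul_nonneg hκ.le hl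
    rw [norm_of_nonneg (mul_nonneg hκ.le (sub_nonneg.2 (one_le_exp_div_cosh hκl))),
      norm_of_nonneg (by positivity)]
    nlinarith [mul_le_mul_of_nonneg_left (exp_div_cosh_sub_one_le hκl) hκ.le]
  have hB : (fun l => c * (exp (-a * l) / cosh (a * l) - 2 * exp (-2 * a * l))) =O[atTop]
      fun l => exp (-2 * b * l) := by
    refine ((IsBigO.of_bound 2 (Eventually.of_forall fun l => ?_)).const_mul_left c).trans hE2
    rw [Real.norm_eq_abs, norm_of_nonneg (by positivity), neg_mul, mul_assoc]
    exact abs_exp_neg_div_cosh_sub_le (a * l)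
  have hR : r =O[atTop] fun l => exp (-2 * b * l) :=
    hr.trans ((hκ2.trans hE2).add (isBigO_refl _ _))
  refine ((hB.add hR).sub hA).congr' ?_ EventuallyEq.rfl
  filter_upwards [heq] with l hl
  linear_combination -hl

lemma eventually_le_and_le_of_isBigO_sub (hab : a < b) (hc : 0 < c)
    (h : (fun l => κ l - 2 * c * exp (-2 * a * l)) =O[atTop] fun l => exp (-2 * b * l)) :
    ∀ᶠ l in atTop, c * exp (-2 * a * l) ≤ κ l ∧ κ l ≤ 3 * c * exp (-2 * a * l) := by
  have hF : (fun l => exp (-2 * b * l)) =o[atTop] fun l => exp (-2 * a * l) :=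
    isLittleO_exp_comp_exp_comp.2 <|
      (tendsto_id.const_mul_atTop (by linarith : 0 < 2 * (b - a))).congr
        fun l => by simp only [id]; ring
  filter_upwards [(h.trans_isLittleO hF).bound hc] with l hl
  rw [Real.norm_eq_abs, norm_of_nonneg (exp_pos _).le, abs_le] at hl
  constructor <;> linarith [hl.1, hl.2]

end ImplicitEquation

/-- Asymptotics of the solution of the implicit equation (6.10). -/
theorem implicit_eq_asymptotics (c C l₀ : ℝ) (κ r : ℝ → ℝ)
    (hc : 0 < c) (hC : 0 < C)
    (hpos : ∀ l ≥ l₀, 0 < κ l)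
    (heq : ∀ l ≥ l₀,
      κ l * Real.exp (κ l * l) / Real.cosh (κ l * l) =
        c * Real.exp (-(Real.sqrt 3) * l) / Real.cosh (Real.sqrt 3 * l) + r l)
    (hr : ∀ l ≥ l₀, |r l| ≤ C *
      ((κ l) ^ 2 * Real.exp (-2 * κ l * l) / (Real.cosh (κ l * l)) ^ 2
        + (κ l) ^ 3 + (κ l) ^ 2 * Real.exp (-2 * Real.sqrt 3 * l)
        + Real.exp (-2 * Real.sqrt 8 * l)))
    (hκ0 : Tendsto κ atTop (𝓝 0)) :
    (∃ C₁ > (0:ℝ), ∃ C₂ > (0:ℝ), ∃ L : ℝ, ∀ l ≥ L,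
        C₁ * Real.exp (-2 * Real.sqrt 3 * l) ≤ κ l ∧
        κ l ≤ C₂ * Real.exp (-2 * Real.sqrt 3 * l)) ∧
    (∃ C₃ : ℝ, ∃ L : ℝ, ∀ l ≥ L,
        |κ l - 2 * c * Real.exp (-2 * Real.sqrt 3 * l)| ≤
          C₃ * Real.exp (-2 * Real.sqrt 8 * l)) := by
  have h38 : √3 < √8 := sqrt_lt_sqrt (by norm_num) (by norm_num)
  have h83 : √8 < 2 * √3 := lt_of_pow_lt_pow_left₀ 2 (by positivity) (by
    rw [mul_pow, sq_sqrt (by norm_num), sq_sqrt (by norm_num)]; norm_num)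
  have hpos' := eventually_atTop.2 ⟨l₀, hpos⟩
  have heq' := eventually_atTop.2 ⟨l₀, heq⟩
  have hrO := remainder_isBigO_sq_add_exp (sqrt_nonneg 3) hC.le hpos' hκ0
    (eventually_atTop.2 ⟨l₀, hr⟩)
  have hsub := isBigO_sub_of_implicit_eq h83 hpos' heq' hrO
    (isBigO_exp_of_implicit_eq hc.le h38.le hpos' hκ0 heq' hrO)
  obtain ⟨L₁, hL₁⟩ := eventually_atTop.1 (eventually_le_and_le_of_isBigO_sub h38 hc hsub)
  obtain ⟨C₃, hC₃⟩ := hsub.bound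
  obtain ⟨L₂, hL₂⟩ := eventually_atTop.1 hC₃
  refine ⟨⟨c, hc, 3 * c, by positivity, L₁, hL₁⟩, C₃, L₂, fun l hl => ?_⟩
  simpa only [Real.norm_eq_abs, abs_of_pos (exp_pos _)] using hL₂ l hl
end
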